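/- arXiv:2007.03170 — 2 statements merged into one kernel-verified Lean document; each statement's English description precedes it below -/
import Mathlib

section
/- For all complex s with Re(s) > |Re(ν)|, the Mellin transform of the K-Bessel function satisfies ∫₀^∞ K_ν(x) x^{s-1} dx = 2^{s-2} Γ((s+ν)/2) Γ((s−ν)/2). -/
/-
Substituting `x = 2y` and then `t = w / y` in the defining integral gives
`K_ν(2y) = (y^{-ν}/2) ∫₀^∞ w^{ν-1} e^{-w} e^{-y²/w} dw`, so the Mellin transform becomes a double
integral over `(y, w)`. Integrating first in `y` produces the Gaussian Mellin transform
`∫₀^∞ y^{s-ν-1} e^{-y²/w} dy = w^{(s-ν)/2} Γ((s-ν)/2) / 2`, and the remaining `w`-integral is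
`Γ((s+ν)/2)`.
-/

open Complex MeasureTheory Set

/-- The modified Bessel function of the second kind, via its integral
representation `K_ν(x) = (1/2) ∫₀^∞ exp(-x(t+1/t)/2) t^{ν-1} dt`. -/
noncomputable def besselK (ν : ℂ) (x : ℝ) : ℂ :=
  (1/2) * ∫ t in Set.Ioi (0:ℝ),
    Complex.exp (-(x:ℂ) * ((t:ℂ) + 1/(t:ℂ)) / 2) * (t:ℂ)^(ν-1)

open Real

lemma re_div_ofReal_pos {a : ℂ} {p : ℝ} (ha : 0 < a.re) (hp : 0 < p) : 0 < (a / p).re := by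
  rw [div_ofReal_re]
  positivity

lemma ofReal_inv_cpow_neg {w : ℝ} (hw : 0 < w) (z : ℂ) :
    ((w⁻¹ : ℝ) : ℂ) ^ (-z) = (w : ℂ) ^ z := by
  rw [ofReal_inv, inv_cpow _ _ (by rw [arg_ofReal_of_nonneg hw.le]; exact pi_ne_zero.symm),
    cpow_neg, inv_inv]

lemma norm_cpow_mul_exp {t : ℝ} (ht : 0 < t) (z : ℂ) (r : ℝ) :
    ‖(t : ℂ) ^ z * (rexp r : ℂ)‖ = t ^ z.re * rexp r := by
  rw [norm_mul, norm_cpow_eq_rpow_re_of_pos ht, norm_real, norm_of_nonneg (exp_pos r).le]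

section MellinExpNegMulRpow

variable {c p : ℝ} {a : ℂ}

lemma mellinConvergent_exp_neg (ha : 0 < a.re) :
    MellinConvergent (fun t : ℝ => (rexp (-t) : ℂ)) a :=
  (Complex.GammaIntegral_convergent ha).congr_fun (fun _ _ => mul_comm _ _) measurableSet_Ioi

lemma mellinConvergent_exp_neg_mul_rpow (hc : 0 < c) (hp : 0 < p) (ha : 0 < a.re) :
    MellinConvergent (fun t : ℝ => (rexp (-c * t ^ p) : ℂ)) a := by
  have h := (MellinConvergent.comp_mul_left hc).mpr
    (mellinConvergent_exp_neg (re_div_ofReal_pos ha hp))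
  simpa only [neg_mul] using (MellinConvergent.comp_rpow hp.ne').mpr h

lemma mellin_exp_neg_mul_rpow (hc : 0 < c) (hp : 0 < p) (ha : 0 < a.re) :
    mellin (fun t : ℝ => (rexp (-c * t ^ p) : ℂ)) a
      = (c : ℂ) ^ (-(a / p)) * Complex.Gamma (a / p) / p := by
  simp_rw [neg_mul]
  rw [mellin_comp_rpow (fun u => (rexp (-(c * u)) : ℂ)),
    mellin_comp_mul_left (fun u => (rexp (-u) : ℂ)) _ hc, ← GammaIntegral_eq_mellin,
    ← Complex.Gamma_eq_integral (re_div_ofReal_pos ha hp), abs_of_pos hp, real_smul,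
    smul_eq_mul, ofReal_inv]
  ring

end MellinExpNegMulRpow

section GaussianMellin

variable {w : ℝ}

lemma integral_cpow_mul_exp_neg_inv_mul_sq (hw : 0 < w) {β : ℂ} (hβ : 0 < β.re) :
    ∫ y in Ioi (0 : ℝ), (y : ℂ) ^ (β - 1) * rexp (-w⁻¹ * y ^ (2 : ℝ))
      = (w : ℂ) ^ (β / 2) * Complex.Gamma (β / 2) / 2 := by
  have h := mellin_exp_neg_mul_rpow (inv_pos.2 hw) two_pos hβ
  rwa [ofReal_ofNat, ofReal_inv_cpow_neg hw] at h

lemma integral_rpow_mul_exp_neg_inv_mul_sq (hw : 0 < w) {σ : ℝ} (hσ : 0 < σ) :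
    ∫ y in Ioi (0 : ℝ), y ^ (σ - 1) * rexp (-w⁻¹ * y ^ (2 : ℝ))
      = w ^ (σ / 2) * Real.Gamma (σ / 2) / 2 := by
  rw [integral_rpow_mul_exp_neg_mul_rpow two_pos (by linarith) (inv_pos.2 hw), sub_add_cancel,
    neg_div, Real.inv_rpow hw.le, Real.rpow_neg (by positivity), inv_inv]
  ring

end GaussianMellin

/-- The integrand of `∫₀^∞ y^{s-1} K_ν(2y) dy` written as a double integral, for `α = ν` and
`β = s - ν`. -/
noncomputable def besselKMellinKernel (α β : ℂ) (y w : ℝ) : ℂ :=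
  (w : ℂ) ^ (α - 1) * rexp (-w) * ((y : ℂ) ^ (β - 1) * rexp (-w⁻¹ * y ^ (2 : ℝ)))

section BesselKMellinKernel

variable {α β : ℂ}

lemma integrable_besselKMellinKernel (hβ : 0 < β.re) (hαβ : 0 < (α + β / 2).re) :
    Integrable (Function.uncurry (besselKMellinKernel α β))
      ((volume.restrict (Ioi 0)).prod (volume.restrict (Ioi 0))) := by
  refine (integrable_prod_iff' ?_).2 ⟨?_, ?_⟩
  · apply Measurable.aestronglyMeasurable
    unfold besselKMellinKernel
    fun_prop
  · filter_upwards [ae_restrict_mem measurableSet_Ioi] with w hw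
    simp only [Function.uncurry_apply_pair, besselKMellinKernel]
    exact (mellinConvergent_exp_neg_mul_rpow (inv_pos.2 hw) two_pos hβ).const_mul _
  · have hre : (α + β / 2).re = α.re + β.re / 2 := by simp
    refine ((Real.GammaIntegral_convergent hαβ).mul_const (Real.Gamma (β.re / 2) / 2)).congr ?_
    filter_upwards [ae_restrict_mem measurableSet_Ioi] with w (hw : 0 < w)
    have hnorm : ∀ y ∈ Ioi (0 : ℝ), ‖besselKMellinKernel α β y w‖
        = w ^ (α.re - 1) * rexp (-w) * (y ^ (β.re - 1) * rexp (-w⁻¹ * y ^ (2 : ℝ))) := by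
      intro y hy
      rw [besselKMellinKernel, norm_mul, norm_cpow_mul_exp hw, norm_cpow_mul_exp hy]
      simp
    simp only [Function.uncurry_apply_pair]
    rw [setIntegral_congr_fun measurableSet_Ioi hnorm,
      integral_const_mul, integral_rpow_mul_exp_neg_inv_mul_sq hw (by simpa using hβ), hre,
      Real.rpow_sub hw, Real.rpow_add hw, Real.rpow_sub hw]
    ring

lemma integral_integral_besselKMellinKernel (hβ : 0 < β.re) (hαβ : 0 < (α + β / 2).re) :
    ∫ y in Ioi (0 : ℝ), ∫ w in Ioi (0 : ℝ), besselKMellinKernel α β y w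
      = Complex.Gamma (α + β / 2) * Complex.Gamma (β / 2) / 2 := by
  rw [integral_integral_swap (integrable_besselKMellinKernel hβ hαβ)]
  calc _ = ∫ w in Ioi (0 : ℝ),
        rexp (-w) * (w : ℂ) ^ (α + β / 2 - 1) * (Complex.Gamma (β / 2) / 2) := by
        refine setIntegral_congr_fun measurableSet_Ioi fun w (hw : 0 < w) => ?_
        rw [show α + β / 2 - 1 = (α - 1) + β / 2 by ring, cpow_add _ _ (ofReal_ne_zero.2 hw.ne')]
        simp only [besselKMellinKernel]
        rw [integral_const_mul, integral_cpow_mul_exp_neg_inv_mul_sq hw hβ]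
        ring
    _ = _ := by
        rw [integral_mul_const, Complex.Gamma_eq_integral hαβ, GammaIntegral, mul_div_assoc]

end BesselKMellinKernel

lemma besselK_two_mul (ν : ℂ) {y : ℝ} (hy : 0 < y) :
    besselK ν (2 * y) = (y : ℂ) ^ (-ν) / 2 *
      ∫ w in Ioi (0 : ℝ), (w : ℂ) ^ (ν - 1) * (rexp (-w) * rexp (-w⁻¹ * y ^ (2 : ℝ))) := by
  have hrescale : ∀ t ∈ Ioi (0 : ℝ),
      Complex.exp (-((2 * y : ℝ) : ℂ) * ((t : ℂ) + 1 / (t : ℂ)) / 2) * (t : ℂ) ^ (ν - 1)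
        = (t : ℂ) ^ (ν - 1) • ((rexp (-(y * t)) : ℂ) * rexp (-(y * t)⁻¹ * y ^ (2 : ℝ))) := by
    intro t (ht : 0 < t)
    rw [smul_eq_mul, mul_comm, ofReal_exp, ofReal_exp, ← Complex.exp_add, Real.rpow_two]
    congr 2
    push_cast
    field_simp
    ring
  rw [besselK, setIntegral_congr_fun measurableSet_Ioi hrescale, ← mellin,
    mellin_comp_mul_left (fun w : ℝ => (rexp (-w) : ℂ) * rexp (-w⁻¹ * y ^ (2 : ℝ))) ν hy,
    smul_eq_mul, mellin]
  simp only [smul_eq_mul]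
  ring

lemma mellin_besselK_comp_two_mul (ν s : ℂ) :
    mellin (fun y => besselK ν (2 * y)) s
      = (∫ y in Ioi (0 : ℝ), ∫ w in Ioi (0 : ℝ), besselKMellinKernel ν (s - ν) y w) / 2 := by
  rw [← integral_div]
  refine setIntegral_congr_fun measurableSet_Ioi fun y (hy : 0 < y) => ?_
  have hpow : (y : ℂ) ^ (s - 1) * (y : ℂ) ^ (-ν) = (y : ℂ) ^ (s - ν - 1) := by
    rw [← cpow_add _ _ (ofReal_ne_zero.2 hy.ne')]
    ring_nf
  have hinner : ∫ w in Ioi (0 : ℝ), besselKMellinKernel ν (s - ν) y w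
      = (y : ℂ) ^ (s - ν - 1) *
        ∫ w in Ioi (0 : ℝ), (w : ℂ) ^ (ν - 1) * (rexp (-w) * rexp (-w⁻¹ * y ^ (2 : ℝ))) := by
    rw [← integral_const_mul]
    congr 1 with w
    rw [besselKMellinKernel, sub_sub]
    ring
  beta_reduce
  rw [smul_eq_mul, hinner, ← hpow, besselK_two_mul ν hy]
  ring

/-- For `Re(s) > |Re(ν)|`, the Mellin transform of `K_ν` is
`∫₀^∞ K_ν(x) x^{s-1} dx = 2^{s-2} Γ((s+ν)/2) Γ((s-ν)/2)`. -/
theorem mellin_besselK (ν s : ℂ) (hs : |ν.re| < s.re) :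
    ∫ x in Set.Ioi (0:ℝ), besselK ν x * (x:ℂ)^(s-1)
      = (2:ℂ)^(s-2) * Complex.Gamma ((s+ν)/2) * Complex.Gamma ((s-ν)/2) := by
  obtain ⟨hν_lower, hν_upper⟩ := abs_lt.mp hs
  have hβ : 0 < (s - ν).re := by rw [sub_re]; linarith
  have hαβ : 0 < (ν + (s - ν) / 2).re := by simp only [add_re, div_ofNat_re, sub_re]; linarith
  have hscale := mellin_comp_mul_left (besselK ν) s (two_pos : (0 : ℝ) < 2)
  rw [mellin_besselK_comp_two_mul, integral_integral_besselKMellinKernel hβ hαβ, ofReal_ofNat,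
    smul_eq_mul, cpow_neg, show ν + (s - ν) / 2 = (s + ν) / 2 by ring] at hscale
  have h2s : (2 : ℂ) ^ s ≠ 0 := by simp [cpow_eq_zero_iff]
  calc ∫ x in Ioi (0 : ℝ), besselK ν x * (x : ℂ) ^ (s - 1) = mellin (besselK ν) s := by
        simp only [mellin, smul_eq_mul, mul_comm]
    _ = _ := by
        rw [cpow_sub _ _ two_ne_zero, cpow_two]
        field_simp at hscale ⊢
        linear_combination -hscale
end

section
/- For every complex number s, K_{s/2}(2) = ∫₀^∞ e^{−t² − 1/t²} t^{s−1} dt, where K denotes the modified Bessel function of the second kind. -/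
open Complex MeasureTheory Set

/-- `K_{s/2}(2) = ∫₀^∞ e^{−t² − 1/t²} t^{s−1} dt` for every complex `s`. -/
theorem besselK_two (s : ℂ) :
    besselK (s/2) 2 = ∫ t in Set.Ioi (0:ℝ),
      Complex.exp (-(t:ℂ)^2 - 1/(t:ℂ)^2) * (t:ℂ)^(s-1) := by
  rw [besselK,
    ← MeasureTheory.integral_comp_rpow_Ioi
      (fun t : ℝ => Complex.exp (-(2:ℝ) * ((t:ℂ) + 1/(t:ℂ)) / 2) * (t:ℂ)^(s/2-1))
      (p := 2) two_ne_zero,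
    ← integral_const_mul]
  refine setIntegral_congr_fun measurableSet_Ioi fun t ht => ?_
  have ht0 : (0:ℝ) < t := ht
  have htc : (t:ℂ) ≠ 0 := by exact_mod_cast ht0.ne'
  have hsq : (t:ℝ) ^ (2:ℝ) = t ^ 2 := by
    rw [Real.rpow_two]
  simp only [hsq]
  have hcast : ((t ^ 2 : ℝ) : ℂ) = (t:ℂ)^2 := by push_cast; ring
  have hlog : (Complex.log (t:ℂ)).im = 0 := by
    rw [Complex.log_im, Complex.arg_ofReal_of_nonneg ht0.le]
  have hpow : ((t:ℂ)^2) ^ (s/2 - 1) = (t:ℂ) ^ (s - 2) := by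
    rw [← Complex.cpow_natCast, ← Complex.cpow_mul]
    · norm_num; ring_nf
    · simp [Complex.mul_im, hlog]; positivity
    · simp [Complex.mul_im, hlog]; exact Real.pi_pos.le
  rw [hcast, hpow]
  have harg : -(2:ℝ) * ((t:ℂ)^2 + 1/(t:ℂ)^2) / 2 = -(t:ℂ)^2 - 1/(t:ℂ)^2 := by
    push_cast; ring
  rw [harg]
  rw [real_smul]
  have : ((|2| * t ^ ((2:ℝ) - 1) : ℝ) : ℂ) = 2 * (t:ℂ) := by
    push_cast [abs_of_pos (show (0:ℝ)<2 by norm_num), Real.rpow_natCast]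
    norm_num
  rw [this, show s - 1 = (s-2)+1 by ring, Complex.cpow_add _ _ htc, Complex.cpow_one]
  ring
end
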